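/- Let Z ∈ ℂ^{n1×n2×n3} and let w = (α_1,…,α_{n3}) be a weight vector of nonnegative reals with |Φ_{tk}| ≤ α_k for all t,k. Then the tensor spectral norm satisfies ‖Σ_{i,j,k} |Z_{ijk}|² e_jk ⋄ e_jkᴴ‖ ≤ ‖Z‖_{∞,w}², where the sum runs over all (i,j,k) ∈ [n1]×[n2]×[n3] and e_jk ∈ ℂ^{n2×1×n3} is the column-basis tensor. -/

import Mathlib

open scoped BigOperators ComplexConjugate
open MeasureTheory Matrix

noncomputable section

/-- A third-order complex tensor. -/
abbrev Tensor (n1 n2 n3 : ℕ) : Type := Fin n1 → Fin n2 → Fin n3 → ℂ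

namespace Tensor

variable {n1 n2 n3 n4 r : ℕ}

/-- The `t`-th frontal slice of the transformed tensor `Φ[A]`. -/
def slice (Φ : Matrix (Fin n3) (Fin n3) ℂ) (A : Tensor n1 n2 n3) (t : Fin n3) :
    Matrix (Fin n1) (Fin n2) ℂ :=
  Matrix.of fun i j => ∑ k, Φ t k * A i j k

/-- Reconstruct a tensor from its transformed frontal slices (inverse transform `Φᴴ[·]`). -/
def unslice (Φ : Matrix (Fin n3) (Fin n3) ℂ)
    (M : Fin n3 → Matrix (Fin n1) (Fin n2) ℂ) : Tensor n1 n2 n3 :=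
  fun i j k => ∑ t, (starRingEnd ℂ) (Φ t k) * M t i j

/-- The Φ-product `A ⋄ B`. -/
def tprod (Φ : Matrix (Fin n3) (Fin n3) ℂ) (A : Tensor n1 n2 n3) (B : Tensor n2 n4 n3) :
    Tensor n1 n4 n3 :=
  unslice Φ fun t => slice Φ A t * slice Φ B t

/-- The conjugate transpose `Aᴴ` with respect to `Φ`. -/
def tconj (Φ : Matrix (Fin n3) (Fin n3) ℂ) (A : Tensor n1 n2 n3) : Tensor n2 n1 n3 :=
  unslice Φ fun t => (slice Φ A t)ᴴ

/-- Frobenius norm of a tensor. -/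
def frob (A : Tensor n1 n2 n3) : ℝ :=
  Real.sqrt (∑ i, ∑ j, ∑ k, Complex.normSq (A i j k))

/-- Entrywise inner product `⟨A, B⟩ = Σ conj(A) B`. -/
def tinner (A B : Tensor n1 n2 n3) : ℂ :=
  ∑ i, ∑ j, ∑ k, (starRingEnd ℂ) (A i j k) * B i j k

/-- `‖A‖_∞`, the max modulus of the entries. -/
def inftyNorm (A : Tensor n1 n2 n3) : ℝ :=
  ⨆ i, ⨆ j, ⨆ k, ‖A i j k‖

/-- `‖A‖_{∞,2}`. -/
def infty2Norm (A : Tensor n1 n2 n3) : ℝ :=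
  max (⨆ i : Fin n1, Real.sqrt (∑ b, ∑ k, Complex.normSq (A i b k)))
      (⨆ j : Fin n2, Real.sqrt (∑ a, ∑ k, Complex.normSq (A a j k)))

/-- The weighted norm `‖A‖_{∞,w}` for a weight vector `w`. -/
def inftyWNorm (w : Fin n3 → ℝ) (A : Tensor n1 n2 n3) : ℝ :=
  max (⨆ i : Fin n1, Real.sqrt (∑ b, ∑ k, (w k) ^ 2 * Complex.normSq (A i b k)))
      (⨆ j : Fin n2, Real.sqrt (∑ a, ∑ k, (w k) ^ 2 * Complex.normSq (A a j k)))

/-- Spectral norm of a complex matrix (ℓ²→ℓ² operator norm). -/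
def specNormM {m n : ℕ} (M : Matrix (Fin m) (Fin n) ℂ) : ℝ :=
  ‖LinearMap.toContinuousLinearMap (Matrix.toEuclideanLin M)‖

/-- Nuclear norm of a complex matrix: the sum of its singular values. -/
def nuclearNormM {m n : ℕ} (M : Matrix (Fin m) (Fin n) ℂ) : ℝ :=
  ∑ i, Real.sqrt ((Matrix.isHermitian_conjTranspose_mul_self M).eigenvalues i)

/-- Tensor spectral norm: max of spectral norms of transformed frontal slices. -/
def specNorm (Φ : Matrix (Fin n3) (Fin n3) ℂ) (A : Tensor n1 n2 n3) : ℝ :=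
  ⨆ t, specNormM (slice Φ A t)

/-- Transformed tensor nuclear norm. -/
def ttnn (Φ : Matrix (Fin n3) (Fin n3) ℂ) (A : Tensor n1 n2 n3) : ℝ :=
  ∑ t, nuclearNormM (slice Φ A t)

/-- The sampling projection `P_Ω`. -/
def projOmega (Ω : Set (Fin n1 × Fin n2 × Fin n3)) (A : Tensor n1 n2 n3) :
    Tensor n1 n2 n3 :=
  fun i j k => Ω.indicator (fun p => A p.1 p.2.1 p.2.2) (i, j, k)

/-- The column-basis tensor `e_ik ∈ ℂ^{n×1×n3}`. -/
def colBasis {n n3 : ℕ} (i : Fin n) (k : Fin n3) : Tensor n 1 n3 :=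
  fun a _ c => if a = i ∧ c = k then 1 else 0

/-- The unit tensor `E_ijk`. -/
def unitTensor (i : Fin n1) (j : Fin n2) (k : Fin n3) : Tensor n1 n2 n3 :=
  fun a b c => if a = i ∧ b = j ∧ c = k then 1 else 0

/-- The orthogonal projection `P_T` onto the subspace `T` determined by `U, V`. -/
def projT (Φ : Matrix (Fin n3) (Fin n3) ℂ) (U : Tensor n1 r n3) (V : Tensor n2 r n3)
    (X : Tensor n1 n2 n3) : Tensor n1 n2 n3 :=
  tprod Φ (tprod Φ U (tconj Φ U)) X + tprod Φ X (tprod Φ V (tconj Φ V))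
    - tprod Φ (tprod Φ (tprod Φ U (tconj Φ U)) X) (tprod Φ V (tconj Φ V))

/-- `P_{T⊥}(X) = X - P_T(X)`. -/
def projTperp (Φ : Matrix (Fin n3) (Fin n3) ℂ) (U : Tensor n1 r n3) (V : Tensor n2 r n3)
    (X : Tensor n1 n2 n3) : Tensor n1 n2 n3 :=
  X - projT Φ U V X

/-- Operator norm of a map on tensors, w.r.t. the Frobenius norm. -/
def opNorm (L : Tensor n1 n2 n3 → Tensor n1 n2 n3) : ℝ :=
  sSup ((fun X => frob (L X)) '' {X | frob X ≤ 1})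

/-- A skinny transformed tensor SVD `Z = U ⋄ S ⋄ Vᴴ`. -/
structure SkinnySVD (Φ : Matrix (Fin n3) (Fin n3) ℂ) (Z : Tensor n1 n2 n3) (r : ℕ)
    (U : Tensor n1 r n3) (S : Tensor r r n3) (V : Tensor n2 r n3) : Prop where
  factor : Z = tprod Φ (tprod Φ U S) (tconj Φ V)
  U_orth : ∀ t, (slice Φ U t)ᴴ * slice Φ U t = 1
  V_orth : ∀ t, (slice Φ V t)ᴴ * slice Φ V t = 1
  S_offdiag : ∀ t i j, i ≠ j → slice Φ S t i j = 0
  S_diag_real_nonneg : ∀ t i, (slice Φ S t i i).im = 0 ∧ 0 ≤ (slice Φ S t i i).re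

/-- The tensor incoherence conditions with parameter μ. -/
def Incoherent (Φ : Matrix (Fin n3) (Fin n3) ℂ) (Z : Tensor n1 n2 n3)
    (U : Tensor n1 r n3) (V : Tensor n2 r n3) (μ : ℝ) : Prop :=
  (∀ (i : Fin n1) (k : Fin n3),
      (frob (tprod Φ (tconj Φ U) (colBasis i k))) ^ 2
        ≤ μ * (∑ t, ((slice Φ Z t).rank : ℝ)) / (n1 * n3)) ∧
  (∀ (j : Fin n2) (k : Fin n3),
      (frob (tprod Φ (tconj Φ V) (colBasis j k))) ^ 2
        ≤ μ * (∑ t, ((slice Φ Z t).rank : ℝ)) / (n2 * n3))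

/-- Bernoulli measure on `Bool` with success probability ρ. -/
def berMeasure (ρ : ℝ) : Measure Bool :=
  ρ.toNNReal • Measure.dirac true + (1 - ρ).toNNReal • Measure.dirac false

instance (ρ : ℝ) : IsFiniteMeasure (berMeasure ρ) := by
  unfold berMeasure; infer_instance

/-- The i.i.d. Bernoulli sampling model `Ω ~ Ber(ρ)`. -/
def berPi (n1 n2 n3 : ℕ) (ρ : ℝ) : Measure ((Fin n1 × Fin n2 × Fin n3) → Bool) :=
  Measure.pi fun _ => berMeasure ρ

/-- The random set `Ω` determined by a Bernoulli sample. -/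
def omegaSet {n1 n2 n3 : ℕ} (ω : (Fin n1 × Fin n2 × Fin n3) → Bool) :
    Set (Fin n1 × Fin n2 × Fin n3) := {p | ω p = true}

end Tensor

open Tensor

/-!
The transformed slice of `e_jk` is the column `Φ_tk · δ_j`, so the `t`-th transformed slice of
`Σ |Z_ijk|² e_jk ⋄ e_jkᴴ` is the diagonal matrix with entries `Σ_{i,k} |Z_iak|² |Φ_tk|²`.
Its spectral norm is its largest entry, and `|Φ_tk| ≤ α_k` bounds each entry by the weighted
squared norm of the `a`-th lateral slice of `Z`, hence by `‖Z‖_{∞,w}²`.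
-/

namespace Tensor

variable {n1 n2 n3 n4 : ℕ} (Φ : Matrix (Fin n3) (Fin n3) ℂ)

theorem slice_unslice (hΦ : Φ * Φᴴ = 1) (M : Fin n3 → Matrix (Fin n1) (Fin n2) ℂ)
    (t : Fin n3) : slice Φ (unslice Φ M) t = M t := by
  ext i j
  calc ∑ c, Φ t c * ∑ s, conj (Φ s c) * M s i j
      = ∑ s, (Φ * Φᴴ) t s * M s i j := by
        simp only [mul_apply, conjTranspose_apply, RCLike.star_def, Finset.mul_sum,
          Finset.sum_mul, mul_assoc]
        exact Finset.sum_comm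
    _ = M t i j := by simp [hΦ, one_apply]

theorem slice_tprod (hΦ : Φ * Φᴴ = 1) (A : Tensor n1 n2 n3) (B : Tensor n2 n4 n3)
    (t : Fin n3) : slice Φ (tprod Φ A B) t = slice Φ A t * slice Φ B t :=
  slice_unslice Φ hΦ _ t

theorem slice_tconj (hΦ : Φ * Φᴴ = 1) (A : Tensor n1 n2 n3) (t : Fin n3) :
    slice Φ (tconj Φ A) t = (slice Φ A t)ᴴ :=
  slice_unslice Φ hΦ _ t

theorem slice_sum {ι : Type*} (s : Finset ι) (A : ι → Tensor n1 n2 n3) (t : Fin n3) :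
    slice Φ (∑ x ∈ s, A x) t = ∑ x ∈ s, slice Φ (A x) t := by
  ext i j
  simp only [slice, of_apply, Matrix.sum_apply, Finset.sum_apply, Finset.mul_sum]
  exact Finset.sum_comm

theorem slice_smul (r : ℝ) (A : Tensor n1 n2 n3) (t : Fin n3) :
    slice Φ (r • A) t = r • slice Φ A t := by
  ext i j
  simp only [slice, of_apply, Matrix.smul_apply, Pi.smul_apply, mul_smul_comm, Finset.smul_sum]

theorem slice_colBasis (j : Fin n2) (k t : Fin n3) :
    slice Φ (colBasis j k) t = replicateCol (Fin 1) (Pi.single j (Φ t k)) := by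
  ext a b
  by_cases h : a = j <;> simp [slice, colBasis, h]

theorem slice_tprod_colBasis_tconj (hΦ : Φ * Φᴴ = 1) (j : Fin n2) (k t : Fin n3) :
    slice Φ (tprod Φ (colBasis j k) (tconj Φ (colBasis j k))) t
      = diagonal (Pi.single j (Complex.normSq (Φ t k) : ℂ)) := by
  rw [slice_tprod Φ hΦ, slice_tconj Φ hΦ, slice_colBasis]
  ext a b
  by_cases ha : a = j <;> by_cases hb : b = j <;>
    simp [mul_apply, diagonal_apply, ha, hb, Complex.mul_conj, Ne.symm]

theorem slice_sum_normSq_smul_tprod_colBasis_tconj (hΦ : Φ * Φᴴ = 1) (Z : Tensor n1 n2 n3)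
    (t : Fin n3) :
    slice Φ (∑ i, ∑ j, ∑ k,
        Complex.normSq (Z i j k) • tprod Φ (colBasis j k) (tconj Φ (colBasis j k))) t
      = diagonal fun a =>
          ((∑ i, ∑ k, Complex.normSq (Z i a k) * Complex.normSq (Φ t k) : ℝ) : ℂ) := by
  simp only [slice_sum, slice_smul, slice_tprod_colBasis_tconj Φ hΦ]
  ext a b
  by_cases hab : a = b
  · subst hab
    simp [Matrix.sum_apply, Pi.single_apply]
  · simp [Matrix.sum_apply, hab]

open scoped Matrix.Norms.L2Operator in
theorem specNormM_diagonal {m : ℕ} (v : Fin m → ℂ) : specNormM (diagonal v) = ‖v‖ :=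
  l2_opNorm_diagonal v

theorem specNorm_le {A : Tensor n1 n2 n3} {c : ℝ} (hc : 0 ≤ c)
    (h : ∀ t, specNormM (slice Φ A t) ≤ c) : specNorm Φ A ≤ c := by
  rcases isEmpty_or_nonempty (Fin n3) with _ | _
  · simpa [specNorm] using hc
  · exact ciSup_le h

theorem sum_sq_mul_normSq_le_inftyWNorm_sq (w : Fin n3 → ℝ) (Z : Tensor n1 n2 n3) (j : Fin n2) :
    ∑ i, ∑ k, w k ^ 2 * Complex.normSq (Z i j k) ≤ inftyWNorm w Z ^ 2 := by
  have hsum : 0 ≤ ∑ i, ∑ k, w k ^ 2 * Complex.normSq (Z i j k) :=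
    Finset.sum_nonneg fun _ _ => Finset.sum_nonneg fun _ _ =>
      mul_nonneg (sq_nonneg _) (Complex.normSq_nonneg _)
  rw [← Real.sq_sqrt hsum]
  gcongr
  exact (le_ciSup (f := fun j => √(∑ i, ∑ k, w k ^ 2 * Complex.normSq (Z i j k)))
    (Set.finite_range _).bddAbove j).trans (le_max_right _ _)

end Tensor

theorem statement15_general {n1 n2 n3 : ℕ} (Φ : Matrix (Fin n3) (Fin n3) ℂ)
    (hΦ : Φ ∈ Matrix.unitaryGroup (Fin n3) ℂ)
    (Z : Tensor n1 n2 n3) (w : Fin n3 → ℝ)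
    (hwΦ : ∀ t k, ‖Φ t k‖ ≤ w k) :
    specNorm Φ (∑ i : Fin n1, ∑ j : Fin n2, ∑ k : Fin n3,
        Complex.normSq (Z i j k) • tprod Φ (colBasis j k) (tconj Φ (colBasis j k)))
      ≤ (inftyWNorm w Z) ^ 2 := by
  refine specNorm_le Φ (sq_nonneg _) fun t => ?_
  rw [slice_sum_normSq_smul_tprod_colBasis_tconj Φ (mem_unitaryGroup_iff.mp hΦ),
    specNormM_diagonal]
  refine (pi_norm_le_iff_of_nonneg (sq_nonneg _)).mpr fun a => ?_
  have hterm : ∀ i k, Complex.normSq (Z i a k) * Complex.normSq (Φ t k)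
      ≤ w k ^ 2 * Complex.normSq (Z i a k) := fun i k => by
    rw [mul_comm, ← Complex.sq_norm]
    exact mul_le_mul_of_nonneg_right (pow_le_pow_left₀ (norm_nonneg _) (hwΦ t k) 2)
      (Complex.normSq_nonneg _)
  rw [Complex.norm_real, Real.norm_of_nonneg (Finset.sum_nonneg fun _ _ =>
    Finset.sum_nonneg fun _ _ => mul_nonneg (Complex.normSq_nonneg _) (Complex.normSq_nonneg _))]
  exact (Finset.sum_le_sum fun i _ => Finset.sum_le_sum fun k _ => hterm i k).trans
    (sum_sq_mul_normSq_le_inftyWNorm_sq w Z a)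

/-- spectral norm bound for Σ |Z_ijk|² e_jk ⋄ e_jkᴴ. -/
theorem statement15 {n1 n2 n3 : ℕ} (Φ : Matrix (Fin n3) (Fin n3) ℂ)
    (hΦ : Φ ∈ Matrix.unitaryGroup (Fin n3) ℂ)
    (Z : Tensor n1 n2 n3) (w : Fin n3 → ℝ)
    (hw0 : ∀ k, 0 ≤ w k) (hwΦ : ∀ t k, ‖Φ t k‖ ≤ w k) :
    specNorm Φ (∑ i : Fin n1, ∑ j : Fin n2, ∑ k : Fin n3,
        Complex.normSq (Z i j k) • tprod Φ (colBasis j k) (tconj Φ (colBasis j k)))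
      ≤ (inftyWNorm w Z) ^ 2 :=
  statement15_general Φ hΦ Z w hwΦ
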